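/- arXiv:1711.01785 — 2 statements merged into one kernel-verified Lean document; each statement's English description precedes it below -/
import Mathlib

section
/- Let k be a field, A a finite-dimensional k-algebra, I a two-sided ideal of A, and identify mod(A/I) with the class of finitely generated A-modules annihilated by I. Let S be a torsion class of mod(A/I). Then: (i) S⁺ := { X ∈ mod A | X/IX ∈ S } is a torsion class of mod A; and (ii) for a torsion class T of mod A, one has T ∩ mod(A/I) = S if and only if T_A(S) ⊆ T ⊆ S⁺, where T_A(S) is the smallest torsion class of mod A containing S. In other words, the fiber of the map T ↦ T ∩ mod(A/I) over S is the interval [T_A(S), S⁺]. -/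
universe u

/-- A torsion class in the category `mod A` of finitely generated `A`-modules:
a class of finitely generated modules, containing the zero modules, closed under
isomorphism, images of surjective homomorphisms (factor modules) and extensions. -/
def IsTorsionClass (A : Type u) [Ring A] (T : Set (ModuleCat.{u} A)) : Prop :=
  (∀ M ∈ T, Module.Finite A M) ∧
  (∀ M : ModuleCat.{u} A, Subsingleton M → M ∈ T) ∧
  (∀ M N : ModuleCat.{u} A, M ∈ T → Nonempty (M ≃ₗ[A] N) → N ∈ T) ∧
  (∀ (M N : ModuleCat.{u} A) (f : M →ₗ[A] N), Function.Surjective f → M ∈ T → N ∈ T) ∧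
  (∀ (M : ModuleCat.{u} A) (S : Submodule A M),
     ModuleCat.of A S ∈ T → ModuleCat.of A (M ⧸ S) ∈ T → M ∈ T)

/-- The smallest torsion class containing a class `C` of modules: the intersection of
all torsion classes containing `C`. -/
def torsGen (A : Type u) [Ring A] (C : Set (ModuleCat.{u} A)) : Set (ModuleCat.{u} A) :=
  ⋂₀ {T | IsTorsionClass A T ∧ C ⊆ T}

/-- A brick: a nonzero finitely generated module all of whose nonzero endomorphisms are
invertible. -/
def IsBrick (A : Type u) [Ring A] (S : ModuleCat.{u} A) : Prop :=
  Nontrivial S ∧ Module.Finite A S ∧ ∀ f : S →ₗ[A] S, f ≠ 0 → Function.Bijective f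

/-- `mod (A/I)`, identified with the class of finitely generated `A`-modules
annihilated by the two-sided ideal `I`. -/
def annMod (A : Type u) [Ring A] (I : TwoSidedIdeal A) : Set (ModuleCat.{u} A) :=
  {X : ModuleCat.{u} A | Module.Finite A X ∧ ∀ a ∈ I, ∀ x : X, a • x = 0}

/-- A torsion class in `mod (A/I)`: a class of finitely generated `A`-modules
annihilated by `I`, containing the zero modules, closed under isomorphism, images
of surjective homomorphisms, and extensions within `mod (A/I)`. -/
def IsTorsionClassMod (A : Type u) [Ring A] (I : TwoSidedIdeal A)
    (T : Set (ModuleCat.{u} A)) : Prop :=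
  (∀ M ∈ T, M ∈ annMod A I) ∧
  (∀ M : ModuleCat.{u} A, Subsingleton M → M ∈ T) ∧
  (∀ M N : ModuleCat.{u} A, M ∈ T → Nonempty (M ≃ₗ[A] N) → N ∈ T) ∧
  (∀ (M N : ModuleCat.{u} A) (f : M →ₗ[A] N), Function.Surjective f → M ∈ T → N ∈ T) ∧
  (∀ M : ModuleCat.{u} A, (∀ a ∈ I, ∀ x : M, a • x = 0) →
    ∀ S : Submodule A M, ModuleCat.of A S ∈ T → ModuleCat.of A (M ⧸ S) ∈ T → M ∈ T)

/-- The submodule `I·X` of `X`. -/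
def idealSMulSub (A : Type u) [Ring A] (I : TwoSidedIdeal A) (X : ModuleCat.{u} A) :
    Submodule A X :=
  Submodule.span A {x : X | ∃ a ∈ I, ∃ m : X, x = a • m}

/-- `S⁺ = { X ∈ mod A | X/IX ∈ S }` for a torsion class `S` of `mod (A/I)`. -/
def torsPlus (A : Type u) [Ring A] (I : TwoSidedIdeal A) (S : Set (ModuleCat.{u} A)) :
    Set (ModuleCat.{u} A) :=
  {X : ModuleCat.{u} A | Module.Finite A X ∧ ModuleCat.of A (X ⧸ idealSMulSub A I X) ∈ S}

section Aux

variable {A : Type u} [Ring A] (I : TwoSidedIdeal A)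

lemma smul_mem_idealSMulSub {a : A} (ha : a ∈ I) {X : ModuleCat.{u} A} (m : X) :
    a • m ∈ idealSMulSub A I X :=
  Submodule.subset_span ⟨a, ha, m, rfl⟩

lemma ann_quot (X : ModuleCat.{u} A) :
    ∀ a ∈ I, ∀ x : X ⧸ idealSMulSub A I X, a • x = 0 := by
  intro a ha x
  obtain ⟨m, rfl⟩ := Submodule.Quotient.mk_surjective _ x
  rw [← Submodule.Quotient.mk_smul]
  exact (Submodule.Quotient.mk_eq_zero _).2 (smul_mem_idealSMulSub I ha m)

/-- Key transfer lemma: if `M/IM ∈ S` and `W` is an `I`-annihilated surjective image of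
`M`, then `W ∈ S`. -/
lemma memS_of_surj {S : Set (ModuleCat.{u} A)} (hS : IsTorsionClassMod A I S)
    (M : ModuleCat.{u} A) (hM : ModuleCat.of A (M ⧸ idealSMulSub A I M) ∈ S)
    (W : Type u) [AddCommGroup W] [Module A W]
    (hW : ∀ a ∈ I, ∀ x : W, a • x = 0)
    (f : M →ₗ[A] W) (hf : Function.Surjective f) :
    ModuleCat.of A W ∈ S := by
  have hker : idealSMulSub A I M ≤ LinearMap.ker f := by
    refine Submodule.span_le.2 ?_
    rintro x ⟨a, ha, m, rfl⟩
    simp [LinearMap.mem_ker, map_smul, hW a ha]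
  set g : (M ⧸ idealSMulSub A I M) →ₗ[A] W := Submodule.liftQ _ f hker with hg
  have hgs : Function.Surjective g := by
    intro w
    obtain ⟨m, rfl⟩ := hf w
    exact ⟨Submodule.Quotient.mk m, Submodule.liftQ_apply _ _ _⟩
  exact hS.2.2.2.1 (ModuleCat.of A (M ⧸ idealSMulSub A I M)) (ModuleCat.of A W) g hgs hM

end Aux

/-- Let `S` be a torsion class of `mod (A/I)`. Then (i) `S⁺ = {X | X/IX ∈ S}` is a
torsion class of `mod A`, and (ii) the fiber of `T ↦ T ∩ mod (A/I)` over `S` is the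
interval `[torsGen A S, S⁺]`. -/
theorem tors_quotient_fiber_interval (k A : Type u) [Field k] [Ring A] [Algebra k A]
    [FiniteDimensional k A] (I : TwoSidedIdeal A)
    (S : Set (ModuleCat.{u} A)) (hS : IsTorsionClassMod A I S) :
    IsTorsionClass A (torsPlus A I S) ∧
    ∀ T : Set (ModuleCat.{u} A), IsTorsionClass A T →
      (T ∩ annMod A I = S ↔ torsGen A S ⊆ T ∧ T ⊆ torsPlus A I S) := by
  constructor
  · -- (i) `S⁺` is a torsion class
    refine ⟨fun M hM => hM.1, ?_, ?_, ?_, ?_⟩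
    · -- zero modules
      intro M hMsub
      haveI := hMsub
      haveI : Finite M := Finite.of_subsingleton
      refine ⟨Module.Finite.of_finite, ?_⟩
      haveI : Subsingleton (M ⧸ idealSMulSub A I M) :=
        (Submodule.Quotient.mk_surjective _).subsingleton
      exact hS.2.1 _ this
    · -- isomorphism closure
      rintro M N hM ⟨e⟩
      haveI : Module.Finite A M := hM.1
      refine ⟨Module.Finite.equiv e, ?_⟩
      exact memS_of_surj I hS M hM.2 (N ⧸ idealSMulSub A I N) (ann_quot I N)
        ((idealSMulSub A I N).mkQ.comp (e : M →ₗ[A] N))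
        ((Submodule.Quotient.mk_surjective _).comp e.surjective)
    · -- surjective images
      intro M N f hf hM
      haveI : Module.Finite A M := hM.1
      refine ⟨Module.Finite.of_surjective f hf, ?_⟩
      exact memS_of_surj I hS M hM.2 (N ⧸ idealSMulSub A I N) (ann_quot I N)
        ((idealSMulSub A I N).mkQ.comp f)
        ((Submodule.Quotient.mk_surjective _).comp hf)
    · -- extensions
      intro M U hU hQ
      haveI hUfin : Module.Finite A U := hU.1
      haveI hQfin : Module.Finite A (M ⧸ U) := hQ.1
      have hMfin : Module.Finite A M := by
        rw [Module.finite_def]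
        refine Submodule.fg_of_fg_map_of_fg_inf_ker U.mkQ ?_ ?_
        · rw [Submodule.map_top, LinearMap.range_eq_top.2 (Submodule.mkQ_surjective U)]
          exact Module.finite_def.1 hQfin
        · rw [Submodule.ker_mkQ, top_inf_eq]
          exact Module.Finite.iff_fg.1 hUfin
      refine ⟨hMfin, ?_⟩
      set J := idealSMulSub A I M with hJ
      set X : ModuleCat.{u} A := ModuleCat.of A (M ⧸ J) with hX
      set π : M →ₗ[A] X := J.mkQ with hπ
      set U' : Submodule A X := U.map π with hU'
      have hXann : ∀ a ∈ I, ∀ x : X, a • x = 0 := ann_quot I M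
      have hU'ann : ∀ a ∈ I, ∀ x : U', a • x = 0 := by
        intro a ha x
        ext
        exact hXann a ha x
      have h1 : ModuleCat.of A U' ∈ S := by
        refine memS_of_surj I hS (ModuleCat.of A U) hU.2 U' hU'ann
          (LinearMap.codRestrict U' (π.comp U.subtype)
            (fun u => Submodule.mem_map_of_mem u.2)) ?_
        rintro ⟨x, u, hu, rfl⟩
        exact ⟨⟨u, hu⟩, rfl⟩
      have h2 : ModuleCat.of A (X ⧸ U') ∈ S := by
        have hUker : U ≤ LinearMap.ker (U'.mkQ.comp π) := by
          intro u hu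
          simp only [LinearMap.mem_ker, LinearMap.comp_apply]
          exact (Submodule.Quotient.mk_eq_zero _).2 (Submodule.mem_map_of_mem hu)
        have hann2 : ∀ a ∈ I, ∀ x : X ⧸ U', a • x = 0 := by
          intro a ha x
          obtain ⟨y, rfl⟩ := Submodule.Quotient.mk_surjective _ x
          rw [← Submodule.Quotient.mk_smul, hXann a ha y]
          exact Submodule.Quotient.mk_zero _
        refine memS_of_surj I hS (ModuleCat.of A (M ⧸ U)) hQ.2 (X ⧸ U') hann2
          (Submodule.liftQ U (U'.mkQ.comp π) hUker) ?_
        intro w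
        obtain ⟨x, rfl⟩ := Submodule.Quotient.mk_surjective _ w
        obtain ⟨m, rfl⟩ := Submodule.Quotient.mk_surjective _ x
        exact ⟨Submodule.Quotient.mk m, rfl⟩
      exact hS.2.2.2.2 X hXann U' h1 h2
  · -- (ii) fiber description
    intro T hT
    constructor
    · rintro rfl
      constructor
      · intro X hX
        exact hX T ⟨hT, Set.inter_subset_left⟩
      · intro X hX
        have hfin : Module.Finite A X := hT.1 X hX
        have hmemT : ModuleCat.of A (X ⧸ idealSMulSub A I X) ∈ T :=
          hT.2.2.2.1 X (ModuleCat.of A (X ⧸ idealSMulSub A I X)) (idealSMulSub A I X).mkQ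
            (Submodule.Quotient.mk_surjective _) hX
        exact ⟨hfin, hmemT, hT.1 _ hmemT, ann_quot I X⟩
    · rintro ⟨h1, h2⟩
      apply Set.Subset.antisymm
      · rintro X ⟨hXT, hXfin, hXann⟩
        have hplus := h2 hXT
        have hbot : idealSMulSub A I X = ⊥ := by
          rw [eq_bot_iff]
          refine Submodule.span_le.2 ?_
          rintro x ⟨a, ha, m, rfl⟩
          simp [hXann a ha m]
        exact hS.2.2.1 (ModuleCat.of A (X ⧸ idealSMulSub A I X)) X hplus.2
          ⟨Submodule.quotEquivOfEqBot _ hbot⟩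
      · intro X hX
        refine ⟨h1 ?_, hS.1 X hX⟩
        intro T' hT'
        exact hT'.2 hX
end

section
/- Let k be a field, A a finite-dimensional k-algebra, I a two-sided ideal of A, and U ⊆ T two torsion classes in mod A. Then T ∩ mod(A/I) = U ∩ mod(A/I) (where mod(A/I) is the class of finitely generated A-modules annihilated by I) if and only if every brick S with S ∈ T and Hom_A(U', S) = 0 for all U' ∈ U satisfies I·S ≠ 0. -/
universe u

variable {A : Type u} [Ring A]

def IsRightOrthogonal (U : Set (ModuleCat.{u} A)) (Y : Type u) [AddCommGroup Y] [Module A Y] :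
    Prop :=
  ∀ U' ∈ U, ∀ f : U' →ₗ[A] Y, f = 0

theorem IsRightOrthogonal.of_injective {U : Set (ModuleCat.{u} A)} {Y Z : Type u}
    [AddCommGroup Y] [Module A Y] [AddCommGroup Z] [Module A Z] (hZ : IsRightOrthogonal U Z)
    (j : Y →ₗ[A] Z) (hj : Function.Injective j) : IsRightOrthogonal U Y := fun U' hU' f =>
  LinearMap.ext fun x => hj (by simpa using LinearMap.congr_fun (hZ U' hU' (j ∘ₗ f)) x)

theorem IsBrick.notMem_of_isRightOrthogonal {U : Set (ModuleCat.{u} A)} {S : ModuleCat.{u} A}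
    (hS : IsBrick A S) (hSU : IsRightOrthogonal U S) : S ∉ U := fun hmem => by
  have : Nontrivial S := hS.1
  obtain ⟨x, hx⟩ := exists_ne (0 : S)
  exact hx (by simpa using LinearMap.congr_fun (hSU S hmem LinearMap.id) x)

theorem mem_annMod_of_surjective {I : TwoSidedIdeal A} {X Y : ModuleCat.{u} A}
    (π : X →ₗ[A] Y) (hπ : Function.Surjective π) (hX : X ∈ annMod A I) : Y ∈ annMod A I := by
  have : Module.Finite A X := hX.1
  refine ⟨Module.Finite.of_surjective π hπ, fun a ha y => ?_⟩
  obtain ⟨x, rfl⟩ := hπ y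
  rw [← map_smul, hX.2 a ha x, map_zero]

section Brick

variable {U : Set (ModuleCat.{u} A)} {Y : Type u} [AddCommGroup Y] [Module A Y]

theorem injective_of_maximal_isRightOrthogonal_quotient {K : Submodule A Y}
    (hK : Maximal (fun K : Submodule A Y => K ≠ ⊤ ∧ IsRightOrthogonal U (Y ⧸ K)) K)
    (f : (Y ⧸ K) →ₗ[A] Y ⧸ K) (hf : f ≠ 0) : Function.Injective f := by
  set K' := LinearMap.ker (f ∘ₗ K.mkQ) with hK'
  have hK'_ne_top : K' ≠ ⊤ := fun htop =>
    hf (K.linearMap_qext (by rw [LinearMap.zero_comp]; exact LinearMap.ker_eq_top.mp htop))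
  have hK'_perp : IsRightOrthogonal U (Y ⧸ K') :=
    hK.1.2.of_injective (K'.liftQ (f ∘ₗ K.mkQ) le_rfl)
      (LinearMap.ker_eq_bot.mp (K'.ker_liftQ_eq_bot' _ hK'))
  have hKK' : K ≤ K' := fun y hy => by
    simp [K', (Submodule.Quotient.mk_eq_zero K).mpr hy]
  have hK'_eq : K' = K := hK.eq_of_ge ⟨hK'_ne_top, hK'_perp⟩ hKK'
  refine LinearMap.ker_eq_bot.mp (eq_bot_iff.mpr fun z hz => ?_)
  obtain ⟨y, rfl⟩ := K.mkQ_surjective z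
  have hy : y ∈ K' := hz
  rw [hK'_eq] at hy
  exact (Submodule.mem_bot A).mpr ((Submodule.Quotient.mk_eq_zero K).mpr hy)

theorem exists_isBrick_quotient [IsNoetherian A Y] [IsArtinian A Y] [Nontrivial Y]
    (hY : IsRightOrthogonal U Y) :
    ∃ K : Submodule A Y, IsBrick A (ModuleCat.of A (Y ⧸ K)) ∧ IsRightOrthogonal U (Y ⧸ K) := by
  have hbot : (⊥ : Submodule A Y) ≠ ⊤ ∧ IsRightOrthogonal U (Y ⧸ (⊥ : Submodule A Y)) :=
    ⟨bot_ne_top, hY.of_injective (Submodule.quotEquivOfEqBot ⊥ rfl).toLinearMap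
      (LinearEquiv.injective _)⟩
  obtain ⟨K, hK⟩ := exists_maximal_of_wellFoundedGT
    (fun K : Submodule A Y => K ≠ ⊤ ∧ IsRightOrthogonal U (Y ⧸ K)) ⟨⊥, hbot⟩
  refine ⟨K, ⟨Submodule.Quotient.nontrivial_iff.mpr hK.1.1, inferInstance, fun f hf => ?_⟩,
    hK.1.2⟩
  have hinj := injective_of_maximal_isRightOrthogonal_quotient hK f hf
  exact ⟨hinj, IsArtinian.surjective_of_injective_endomorphism f hinj⟩

end Brick

namespace IsTorsionClass

variable {U : Set (ModuleCat.{u} A)} {M N : Type u} [AddCommGroup M] [Module A M]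
  [AddCommGroup N] [Module A N]

theorem of_linearEquiv (hU : IsTorsionClass A U) (e : M ≃ₗ[A] N)
    (hM : ModuleCat.of A M ∈ U) : ModuleCat.of A N ∈ U :=
  hU.2.2.1 _ _ hM ⟨e⟩

theorem of_surjective (hU : IsTorsionClass A U) (f : M →ₗ[A] N) (hf : Function.Surjective f)
    (hM : ModuleCat.of A M ∈ U) : ModuleCat.of A N ∈ U :=
  hU.2.2.2.1 _ (ModuleCat.of A N) f hf hM

theorem of_ker_of_range (hU : IsTorsionClass A U) (f : M →ₗ[A] N)
    (hker : ModuleCat.of A (LinearMap.ker f) ∈ U)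
    (hrange : ModuleCat.of A (LinearMap.range f) ∈ U) :
    ModuleCat.of A M ∈ U :=
  hU.2.2.2.2 (ModuleCat.of A M) _ hker (hU.of_linearEquiv f.quotKerEquivRange.symm hrange)

theorem map_mem (hU : IsTorsionClass A U) (f : M →ₗ[A] N) {P : Submodule A M}
    (hP : ModuleCat.of A P ∈ U) : ModuleCat.of A (P.map f) ∈ U :=
  hU.of_surjective (f.submoduleMap P) (f.submoduleMap_surjective P) hP

theorem mem_of_le_of_map_mkQ_mem (hU : IsTorsionClass A U) {K P : Submodule A M} (hKP : K ≤ P)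
    (hK : ModuleCat.of A K ∈ U) (hPK : ModuleCat.of A (P.map K.mkQ) ∈ U) :
    ModuleCat.of A P ∈ U := by
  refine hU.of_ker_of_range (K.mkQ ∘ₗ P.subtype) ?_ ?_
  · rw [LinearMap.ker_comp, Submodule.ker_mkQ]
    exact hU.of_linearEquiv (Submodule.comapSubtypeEquivOfLe hKP).symm hK
  · rwa [LinearMap.range_comp, Submodule.range_subtype]

theorem sup_mem (hU : IsTorsionClass A U) {K P : Submodule A M} (hK : ModuleCat.of A K ∈ U)
    (hP : ModuleCat.of A P ∈ U) : ModuleCat.of A ↥(K ⊔ P) ∈ U := by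
  refine hU.mem_of_le_of_map_mkQ_mem le_sup_left hK ?_
  rw [Submodule.map_sup, Submodule.mkQ_map_self, bot_sup_eq]
  exact hU.map_mem K.mkQ hP

theorem exists_greatest_submodule [IsNoetherian A M] (hU : IsTorsionClass A U) :
    ∃ K : Submodule A M, ModuleCat.of A K ∈ U ∧
      ∀ P : Submodule A M, ModuleCat.of A P ∈ U → P ≤ K := by
  obtain ⟨K, hK⟩ := exists_maximal_of_wellFoundedGT
    (fun K : Submodule A M => ModuleCat.of A K ∈ U) ⟨⊥, hU.2.1 _ inferInstance⟩
  exact ⟨K, hK.1, fun P hP => le_sup_right.trans (hK.2 (hU.sup_mem hK.1 hP) le_sup_left)⟩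

theorem isRightOrthogonal_quotient_of_greatest (hU : IsTorsionClass A U) {K : Submodule A M}
    (hK : ModuleCat.of A K ∈ U) (hmax : ∀ P : Submodule A M, ModuleCat.of A P ∈ U → P ≤ K) :
    IsRightOrthogonal U (M ⧸ K) := by
  intro U' hU' f
  have hrange : ModuleCat.of A (LinearMap.range f) ∈ U :=
    hU.of_surjective f.rangeRestrict f.surjective_rangeRestrict hU'
  have hpre : ModuleCat.of A ((LinearMap.range f).comap K.mkQ) ∈ U :=
    hU.mem_of_le_of_map_mkQ_mem (K.ker_mkQ.ge.trans (LinearMap.ker_le_comap K.mkQ)) hK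
      (by rwa [Submodule.map_comap_eq_of_surjective K.mkQ_surjective])
  refine LinearMap.range_eq_bot.mp (eq_bot_iff.mpr ?_)
  calc LinearMap.range f = ((LinearMap.range f).comap K.mkQ).map K.mkQ :=
        (Submodule.map_comap_eq_of_surjective K.mkQ_surjective _).symm
    _ ≤ K.map K.mkQ := Submodule.map_mono (hmax _ hpre)
    _ = ⊥ := Submodule.mkQ_map_self K

theorem exists_surjective_isBrick [IsNoetherianRing A] [IsArtinianRing A]
    (hU : IsTorsionClass A U) {X : ModuleCat.{u} A} [Module.Finite A X] (hX : X ∉ U) :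
    ∃ (S : ModuleCat.{u} A) (π : X →ₗ[A] S), Function.Surjective π ∧ IsBrick A S ∧
      IsRightOrthogonal U S := by
  obtain ⟨K, hK, hmax⟩ := hU.exists_greatest_submodule (M := X)
  have hK_ne_top : K ≠ ⊤ := fun htop =>
    hX (hU.of_linearEquiv Submodule.topEquiv (htop ▸ hK))
  have : Nontrivial (X ⧸ K) := Submodule.Quotient.nontrivial_iff.mpr hK_ne_top
  obtain ⟨L, hL, hLperp⟩ :=
    exists_isBrick_quotient (hU.isRightOrthogonal_quotient_of_greatest hK hmax)
  exact ⟨_, L.mkQ ∘ₗ K.mkQ, L.mkQ_surjective.comp K.mkQ_surjective, hL, hLperp⟩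

end IsTorsionClass

/-- For torsion classes `U ⊆ T` and a two-sided ideal `I`,
`T ∩ mod (A/I) = U ∩ mod (A/I)` iff every brick `S ∈ T` with `Hom_A(U', S) = 0`
for all `U' ∈ U` satisfies `I·S ≠ 0`. -/
theorem tors_congruent_iff_bricks_not_annihilated (k A : Type u) [Field k] [Ring A]
    [Algebra k A] [FiniteDimensional k A] (I : TwoSidedIdeal A)
    (T U : Set (ModuleCat.{u} A)) (hT : IsTorsionClass A T) (hU : IsTorsionClass A U)
    (hUT : U ⊆ T) :
    T ∩ annMod A I = U ∩ annMod A I ↔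
    ∀ S : ModuleCat.{u} A, IsBrick A S → S ∈ T →
      (∀ U' ∈ U, ∀ f : U' →ₗ[A] S, f = 0) →
      ∃ a ∈ I, ∃ x : S, a • x ≠ 0 := by
  constructor
  · intro heq S hS hST hSU
    by_contra! hann
    have hmem : S ∈ U ∩ annMod A I := heq ▸ ⟨hST, hS.2.1, hann⟩
    exact hS.notMem_of_isRightOrthogonal hSU hmem.1
  · intro hbricks
    refine Set.Subset.antisymm ?_ (Set.inter_subset_inter_left _ hUT)
    rintro X ⟨hXT, hXI⟩
    refine ⟨by_contra fun hXU => ?_, hXI⟩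
    have : IsNoetherianRing A := isNoetherian_of_tower k inferInstance
    have : IsArtinianRing A := isArtinian_of_tower k inferInstance
    have : Module.Finite A X := hXI.1
    obtain ⟨S, π, hπ, hS, hSU⟩ := hU.exists_surjective_isBrick hXU
    obtain ⟨a, ha, x, hx⟩ := hbricks S hS (hT.of_surjective π hπ hXT) hSU
    exact hx ((mem_annMod_of_surjective π hπ hXI).2 a ha x)
end
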